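/- arXiv:1108.4957 — 5 statements merged into one kernel-verified Lean document; each statement's English description precedes it below -/
import Mathlib

section
/- Let Y : M → N be a continuous map between locally compact Hausdorff spaces with set of not-proper points S_Y. If Y is an open map (e.g., a local homeomorphism), then the topological frontier of the image Y(M) is contained in S_Y. -/
open Set Topology

/-- The set of points at which `Y` is not proper. -/
def notProperSet {M N : Type*} [TopologicalSpace M] [TopologicalSpace N] (Y : M → N) : Set N :=
  {y | ¬ ∃ U ∈ nhds y, IsCompact (Y ⁻¹' closure U)}

theorem mem_closure_inter_of_mem_nhds {X : Type*} [TopologicalSpace X] {s t : Set X} {x : X}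
    (hs : x ∈ closure s) (ht : t ∈ 𝓝 x) : x ∈ closure (s ∩ t) := by
  rw [mem_closure_iff_nhdsWithin_neBot, inter_comm,
    nhdsWithin_inter_of_mem (mem_nhdsWithin_of_mem_nhds ht)]
  exact mem_closure_iff_nhdsWithin_neBot.1 hs

section

variable {M N : Type*} [TopologicalSpace M] [TopologicalSpace N] [T2Space N] {Y : M → N}

theorem mem_range_of_mem_closure_range_of_isCompact_preimage (hY : Continuous Y) {y : N}
    (hy : y ∈ closure (range Y)) {U : Set N} (hU : U ∈ 𝓝 y)
    (hK : IsCompact (Y ⁻¹' closure U)) : y ∈ range Y := by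
  have hclosed : IsClosed (range Y ∩ closure U) :=
    image_preimage_eq_range_inter ▸ (hK.image hY).isClosed
  have hU' : closure U ∈ 𝓝 y := Filter.mem_of_superset hU subset_closure
  exact (hclosed.closure_subset (mem_closure_inter_of_mem_nhds hy hU')).1

theorem closure_range_diff_notProperSet_subset (hY : Continuous Y) :
    closure (range Y) \ notProperSet Y ⊆ range Y := by
  rintro y ⟨hy, hproper⟩
  obtain ⟨U, hU, hK⟩ := not_not.1 hproper
  exact mem_range_of_mem_closure_range_of_isCompact_preimage hY hy hU hK

end

theorem stmt2_general {M N : Type*} [TopologicalSpace M] [TopologicalSpace N]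
    [T2Space N]
    (Y : M → N) (hY : Continuous Y) (hopen : IsOpenMap Y) :
    frontier (Set.range Y) ⊆ notProperSet Y := by
  rw [hopen.isOpen_range.frontier_eq]
  intro y hy
  by_contra hproper
  exact hy.2 (closure_range_diff_notProperSet_subset hY ⟨hy.1, hproper⟩)

theorem stmt2 {M N : Type*} [TopologicalSpace M] [TopologicalSpace N]
    [LocallyCompactSpace M] [T2Space M] [LocallyCompactSpace N] [T2Space N]
    (Y : M → N) (hY : Continuous Y) (hopen : IsOpenMap Y) :
    frontier (Set.range Y) ⊆ notProperSet Y :=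
  stmt2_general Y hY hopen
end

section
/- Let Y : M → N be a continuous map between locally compact Hausdorff spaces and S_Y its set of not-proper points. Then the restriction Y : M \ Y⁻¹(S_Y) → N \ S_Y is a proper map. -/
/-!
Cover the compact set `K ⊆ N \ S_Y` by finitely many neighbourhoods `U` with `Y⁻¹(closure U)`
compact. Then `Y⁻¹(K)` is a closed subset of a compact set, and it already misses `Y⁻¹(S_Y)`.
-/

open Topology

section NotProperSet

variable {M N : Type*} [TopologicalSpace M] [TopologicalSpace N] {Y : M → N}

theorem exists_isCompact_superset_preimage_of_subset_compl_notProperSet {K : Set N}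
    (hK : IsCompact K) (hKS : K ⊆ (notProperSet Y)ᶜ) :
    ∃ L : Set M, IsCompact L ∧ Y ⁻¹' K ⊆ L := by
  have hU : ∀ y ∈ K, ∃ U ∈ 𝓝 y, IsCompact (Y ⁻¹' closure U) := fun _ hy =>
    not_not.mp (hKS hy)
  choose! U hU_nhds hU_compact using hU
  obtain ⟨t, htK, hKt⟩ := hK.elim_nhds_subcover U hU_nhds
  refine ⟨⋃ y ∈ t, Y ⁻¹' closure (U y), t.isCompact_biUnion fun y hy => hU_compact y (htK y hy),
    fun x hx => ?_⟩
  obtain ⟨y, hyt, hxy⟩ := Set.mem_iUnion₂.mp (hKt hx)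
  exact Set.mem_biUnion hyt (subset_closure hxy)

theorem isCompact_preimage_of_subset_compl_notProperSet [T2Space N] (hY : Continuous Y)
    {K : Set N} (hK : IsCompact K) (hKS : K ⊆ (notProperSet Y)ᶜ) : IsCompact (Y ⁻¹' K) := by
  obtain ⟨L, hL, hKL⟩ := exists_isCompact_superset_preimage_of_subset_compl_notProperSet hK hKS
  exact hL.of_isClosed_subset (hK.isClosed.preimage hY) hKL

end NotProperSet

theorem stmt3_general {M N : Type*} [TopologicalSpace M] [TopologicalSpace N]
    [T2Space N]
    (Y : M → N) (hY : Continuous Y) :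
    ∀ K : Set N, K ⊆ (notProperSet Y)ᶜ → IsCompact K →
      IsCompact (Y ⁻¹' K ∩ (Y ⁻¹' notProperSet Y)ᶜ) := by
  intro K hKS hK
  rw [← Set.preimage_compl, Set.inter_eq_left.mpr (Set.preimage_mono hKS)]
  exact isCompact_preimage_of_subset_compl_notProperSet hY hK hKS

/-- The restriction `Y : M \ Y⁻¹(S_Y) → N \ S_Y` is proper. -/
theorem stmt3 {M N : Type*} [TopologicalSpace M] [TopologicalSpace N]
    [LocallyCompactSpace M] [T2Space M] [LocallyCompactSpace N] [T2Space N]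
    (Y : M → N) (hY : Continuous Y) :
    ∀ K : Set N, K ⊆ (notProperSet Y)ᶜ → IsCompact K →
      IsCompact (Y ⁻¹' K ∩ (Y ⁻¹' notProperSet Y)ᶜ) :=
  stmt3_general Y hY
end

section
/- Let Y : ℝⁿ → ℝⁿ be a continuous map that is a local homeomorphism, and suppose Y is proper at a point p₀ (there exists a neighborhood U of p₀ with Y⁻¹(closure U) compact). Then the fiber-counting function h(p) = #Y⁻¹(p) is finite and locally constant at p₀. -/
/-!
A local homeomorphism has discrete fibres, so the compact fibre over `p₀` is finite, say
`{x₁, …, xₖ}`. Choose pairwise disjoint open sets `Wᵢ ∋ xᵢ` on which `Y` is injective. By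
properness, every fibre over a point near `p₀` lies in `⋃ Wᵢ`; since `Y` is open, every point
near `p₀` lies in each `Y '' Wᵢ`. So such a fibre meets each `Wᵢ` in exactly one point and
nowhere else, and it has `k` elements.
-/

open Set Filter Topology

variable {X Z : Type*} {f : X → Z}

theorem Set.bijOn_of_pairwiseDisjoint_injOn {s : Set X} {W : X → Set X}
    (hdisj : s.PairwiseDisjoint W) (hinj : ∀ x ∈ s, (W x).InjOn f) (p : Z)
    (hcover : f ⁻¹' {p} ⊆ ⋃ x ∈ s, W x) (hsurj : ∀ x ∈ s, p ∈ f '' W x) :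
    ∃ g : X → X, BijOn g s (f ⁻¹' {p}) := by
  choose! g hgW hgp using hsurj
  refine ⟨g, fun x hx => hgp x hx, fun x hx y hy hxy => ?_, fun q hq => ?_⟩
  · by_contra hne
    exact disjoint_left.mp (hdisj hx hy hne) (hgW x hx) (hxy ▸ hgW y hy)
  · obtain ⟨x, hx, hqW⟩ := mem_iUnion₂.mp (hcover hq)
    exact ⟨x, hx, hinj x hx (hgW x hx) hqW ((hgp x hx).trans hq.symm)⟩

variable [TopologicalSpace X]

theorem IsLocallyInjective.isDiscrete_preimage_singleton (hf : IsLocallyInjective f) (z : Z) :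
    IsDiscrete (f ⁻¹' {z}) := by
  refine isDiscrete_iff_forall_mem_exists_isOpen.mpr fun x hx => ?_
  obtain ⟨U, hUo, hxU, hinj⟩ := hf x
  refine ⟨U, hUo, subset_antisymm (fun y hy => hinj hy.1 hxU ?_) (by simpa using ⟨hxU, hx⟩)⟩
  exact hy.2.trans hx.symm

theorem IsLocallyInjective.finite_preimage_singleton (hf : IsLocallyInjective f) {z : Z}
    (hc : IsCompact (f ⁻¹' {z})) : (f ⁻¹' {z}).Finite :=
  hc.finite (hf.isDiscrete_preimage_singleton z)

theorem IsLocallyInjective.exists_pairwiseDisjoint_injOn [T2Space X] (hf : IsLocallyInjective f)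
    {s : Set X} (hs : s.Finite) :
    ∃ W : X → Set X, (∀ x, x ∈ W x ∧ IsOpen (W x) ∧ (W x).InjOn f) ∧ s.PairwiseDisjoint W := by
  obtain ⟨U, hU, hdisj⟩ := hs.t2_separation
  choose V hVo hxV hinj using hf
  exact ⟨fun x => U x ∩ V x, fun x => ⟨⟨(hU x).1, hxV x⟩, (hU x).2.inter (hVo x),
    (hinj x).mono inter_subset_right⟩, hdisj.mono fun x => inter_subset_left⟩

theorem eventually_preimage_singleton_subset [TopologicalSpace Z] [T2Space Z]
    (hf : Continuous f) {z : Z} {U : Set Z} (hU : U ∈ 𝓝 z) (hK : IsCompact (f ⁻¹' U))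
    {O : Set X} (hO : IsOpen O) (hzO : f ⁻¹' {z} ⊆ O) : ∀ᶠ p in 𝓝 z, f ⁻¹' {p} ⊆ O := by
  have hC : IsClosed (f '' (f ⁻¹' U \ O)) := ((hK.diff hO).image hf).isClosed
  have hzC : z ∉ f '' (f ⁻¹' U \ O) := by
    rintro ⟨x, ⟨-, hxO⟩, hx⟩
    exact hxO (hzO hx)
  filter_upwards [hU, hC.isOpen_compl.mem_nhds hzC] with p hpU hpC x hx
  by_contra hxO
  exact hpC ⟨x, ⟨by simpa [show f x = p from hx] using hpU, hxO⟩, hx⟩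

theorem IsLocalHomeomorph.eventually_bijOn_preimage_singleton [TopologicalSpace Z]
    [T2Space X] [T2Space Z] (hf : IsLocalHomeomorph f) {z : Z} {U : Set Z} (hU : U ∈ 𝓝 z)
    (hK : IsCompact (f ⁻¹' U)) (hfin : (f ⁻¹' {z}).Finite) :
    ∀ᶠ p in 𝓝 z, ∃ g : X → X, BijOn g (f ⁻¹' {z}) (f ⁻¹' {p}) := by
  obtain ⟨W, hW, hdisj⟩ := hf.isLocallyInjective.exists_pairwiseDisjoint_injOn hfin
  have hcover : ∀ᶠ p in 𝓝 z, f ⁻¹' {p} ⊆ ⋃ x ∈ f ⁻¹' {z}, W x :=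
    eventually_preimage_singleton_subset hf.continuous hU hK
      (isOpen_biUnion fun x _ => (hW x).2.1) fun x hx => mem_biUnion hx (hW x).1
  have himage : ∀ᶠ p in 𝓝 z, ∀ x ∈ f ⁻¹' {z}, p ∈ f '' W x :=
    hfin.eventually_all.mpr fun x (hx : f x = z) =>
      hx ▸ hf.isOpenMap.image_mem_nhds ((hW x).2.1.mem_nhds (hW x).1)
  filter_upwards [hcover, himage] with p hp hp'
  exact bijOn_of_pairwiseDisjoint_injOn hdisj (fun x _ => (hW x).2.2) p hp hp'

/-- If a local homeomorphism `Y : ℝⁿ → ℝⁿ` is proper at `p₀` (some neighborhood `U`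
of `p₀` has `Y ⁻¹' (closure U)` compact), then its fiber-counting function is finite
and locally constant at `p₀`. -/
theorem stmt12 {n : ℕ} (Y : (Fin n → ℝ) → (Fin n → ℝ)) (hloc : IsLocalHomeomorph Y)
    (p₀ : Fin n → ℝ) (hprop : ∃ U ∈ nhds p₀, IsCompact (Y ⁻¹' closure U)) :
    (Y ⁻¹' {p₀}).Finite ∧
      ∃ V ∈ nhds p₀, ∀ p ∈ V, (Y ⁻¹' {p}).Finite ∧
        (Y ⁻¹' {p}).ncard = (Y ⁻¹' {p₀}).ncard := by
  obtain ⟨U, hU, hK⟩ := hprop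
  have hfiber_subset : Y ⁻¹' {p₀} ⊆ Y ⁻¹' closure U :=
    preimage_mono (singleton_subset_iff.mpr (subset_closure (mem_of_mem_nhds hU)))
  have hfin : (Y ⁻¹' {p₀}).Finite := hloc.isLocallyInjective.finite_preimage_singleton
    (hK.of_isClosed_subset (isClosed_singleton.preimage hloc.continuous) hfiber_subset)
  refine ⟨hfin, _, hloc.eventually_bijOn_preimage_singleton
    (mem_of_superset hU subset_closure) hK hfin, fun p ⟨g, hg⟩ => ?_⟩
  exact ⟨hg.image_eq ▸ hfin.image g, hg.ncard_eq.symm⟩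
end

section
/- Define Y : ℝ³ → ℝ³ by Y(x,y,z) = (√(1+x²) − x, √(1+y²) − y, z(1+x²)(1+y²)). Then Y is a C^∞ local diffeomorphism whose set of real eigenvalues of derivatives satisfies Spec(Y) ∩ [0,1) = ∅, and Y is not surjective. -/
open Real

noncomputable def aa (x : ℝ) : ℝ := x / Real.sqrt (1 + x ^ 2) - 1

lemma one_add_sq_pos (x : ℝ) : (0:ℝ) < 1 + x ^ 2 := by positivity

lemma sqrt_pos' (x : ℝ) : 0 < Real.sqrt (1 + x ^ 2) := Real.sqrt_pos.mpr (one_add_sq_pos x)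

lemma lt_sqrt' (x : ℝ) : x < Real.sqrt (1 + x ^ 2) := by
  rcases le_or_gt x 0 with h | h
  · exact lt_of_le_of_lt h (sqrt_pos' x)
  · rw [show (1:ℝ) + x ^ 2 = x ^ 2 + 1 by ring]
    exact (Real.lt_sqrt h.le).mpr (by linarith)

lemma aa_neg (x : ℝ) : aa x < 0 := by
  have h := sqrt_pos' x
  have := lt_sqrt' x
  unfold aa
  rw [sub_neg, div_lt_one h]
  exact this

lemma hf (x : ℝ) : HasDerivAt (fun t => Real.sqrt (1 + t ^ 2) - t) (aa x) x := by
  have h1 : HasDerivAt (fun t : ℝ => 1 + t ^ 2) (2 * x) x := by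
    simpa using ((hasDerivAt_pow 2 x).const_add 1)
  have h2 := (Real.hasDerivAt_sqrt (ne_of_gt (one_add_sq_pos x))).comp x h1
  have h3 := h2.sub (hasDerivAt_id x)
  refine h3.congr_deriv ?_
  symm
  have h := sqrt_pos' x
  unfold aa
  field_simp

section
variable (p : ℝ × ℝ × ℝ)

noncomputable abbrev e1 : ℝ × ℝ × ℝ →L[ℝ] ℝ := ContinuousLinearMap.fst ℝ ℝ (ℝ × ℝ)
noncomputable abbrev e2 : ℝ × ℝ × ℝ →L[ℝ] ℝ :=
  (ContinuousLinearMap.fst ℝ ℝ ℝ).comp (ContinuousLinearMap.snd ℝ ℝ (ℝ × ℝ))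
noncomputable abbrev e3 : ℝ × ℝ × ℝ →L[ℝ] ℝ :=
  (ContinuousLinearMap.snd ℝ ℝ ℝ).comp (ContinuousLinearMap.snd ℝ ℝ (ℝ × ℝ))

lemma key (Y : ℝ × ℝ × ℝ → ℝ × ℝ × ℝ)
    (hYdef : ∀ p : ℝ × ℝ × ℝ, Y p =
      (Real.sqrt (1 + p.1 ^ 2) - p.1, Real.sqrt (1 + p.2.1 ^ 2) - p.2.1,
        p.2.2 * (1 + p.1 ^ 2) * (1 + p.2.1 ^ 2))) (p : ℝ × ℝ × ℝ) :
    ∃ L : ℝ × ℝ × ℝ →L[ℝ] ℝ × ℝ × ℝ, HasFDerivAt Y L p ∧ ∀ v : ℝ × ℝ × ℝ,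
      L v = (aa p.1 * v.1, aa p.2.1 * v.2.1,
        v.2.2 * (1 + p.1 ^ 2) * (1 + p.2.1 ^ 2)
          + p.2.2 * (2 * p.1 * v.1) * (1 + p.2.1 ^ 2)
          + p.2.2 * (1 + p.1 ^ 2) * (2 * p.2.1 * v.2.1)) := by
  obtain ⟨x, y, z⟩ := p
  have hfst : HasFDerivAt (fun q : ℝ × ℝ × ℝ => q.1) e1 (x, y, z) := hasFDerivAt_fst
  have hsnd1 : HasFDerivAt (fun q : ℝ × ℝ × ℝ => q.2.1) e2 (x, y, z) :=
    hasFDerivAt_fst.comp _ hasFDerivAt_snd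
  have hsnd2 : HasFDerivAt (fun q : ℝ × ℝ × ℝ => q.2.2) e3 (x, y, z) :=
    hasFDerivAt_snd.comp _ hasFDerivAt_snd
  have h1 : HasFDerivAt (fun q : ℝ × ℝ × ℝ => Real.sqrt (1 + q.1 ^ 2) - q.1)
      (aa x • e1) (x, y, z) := by have := (hf x).comp_hasFDerivAt (x, y, z) hfst; exact this
  have h2 : HasFDerivAt (fun q : ℝ × ℝ × ℝ => Real.sqrt (1 + q.2.1 ^ 2) - q.2.1)
      (aa y • e2) (x, y, z) := by have := (hf y).comp_hasFDerivAt (x, y, z) hsnd1; exact this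
  have hgx : HasFDerivAt (fun q : ℝ × ℝ × ℝ => 1 + q.1 ^ 2) ((2 * x) • e1) (x, y, z) := by
    have : HasDerivAt (fun t : ℝ => 1 + t ^ 2) (2 * x) x := by
      simpa using ((hasDerivAt_pow 2 x).const_add 1)
    exact HasDerivAt.comp_hasFDerivAt (h₂ := fun t : ℝ => 1 + t ^ 2) _ this hfst
  have hgy : HasFDerivAt (fun q : ℝ × ℝ × ℝ => 1 + q.2.1 ^ 2) ((2 * y) • e2) (x, y, z) := by
    have : HasDerivAt (fun t : ℝ => 1 + t ^ 2) (2 * y) y := by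
      simpa using ((hasDerivAt_pow 2 y).const_add 1)
    exact HasDerivAt.comp_hasFDerivAt (h₂ := fun t : ℝ => 1 + t ^ 2) _ this hsnd1
  have h3 := (hsnd2.mul hgx).mul hgy
  have hY : Y = fun q : ℝ × ℝ × ℝ =>
      (Real.sqrt (1 + q.1 ^ 2) - q.1, Real.sqrt (1 + q.2.1 ^ 2) - q.2.1,
        q.2.2 * (1 + q.1 ^ 2) * (1 + q.2.1 ^ 2)) := funext hYdef
  refine ⟨_, hY ▸ (h1.prodMk (h2.prodMk h3)), fun v => ?_⟩
  simp [ContinuousLinearMap.smul_apply, smul_eq_mul]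
  ring
end

/-- `Y(x,y,z) = (√(1+x²) − x, √(1+y²) − y, z(1+x²)(1+y²))` is a smooth local
diffeomorphism of `ℝ³` with no real eigenvalue of any derivative in `[0, 1)`,
yet `Y` is not surjective. -/
theorem stmt16 (Y : ℝ × ℝ × ℝ → ℝ × ℝ × ℝ)
    (hYdef : ∀ p : ℝ × ℝ × ℝ, Y p =
      (Real.sqrt (1 + p.1 ^ 2) - p.1, Real.sqrt (1 + p.2.1 ^ 2) - p.2.1,
        p.2.2 * (1 + p.1 ^ 2) * (1 + p.2.1 ^ 2))) :
    ContDiff ℝ (⊤ : ℕ∞) Y ∧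
    (∀ p, Function.Bijective (fderiv ℝ Y p)) ∧
    (∀ (p : ℝ × ℝ × ℝ) (l : ℝ) (v : ℝ × ℝ × ℝ), v ≠ 0 → fderiv ℝ Y p v = l • v →
      l ∉ Set.Ico (0 : ℝ) 1) ∧
    ¬ Function.Surjective Y := by
  have hY : Y = fun q : ℝ × ℝ × ℝ =>
      (Real.sqrt (1 + q.1 ^ 2) - q.1, Real.sqrt (1 + q.2.1 ^ 2) - q.2.1,
        q.2.2 * (1 + q.1 ^ 2) * (1 + q.2.1 ^ 2)) := funext hYdef
  have hzero : ∀ (p v : ℝ × ℝ × ℝ) (l : ℝ),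
      (aa p.1 * v.1, aa p.2.1 * v.2.1,
        v.2.2 * (1 + p.1 ^ 2) * (1 + p.2.1 ^ 2)
          + p.2.2 * (2 * p.1 * v.1) * (1 + p.2.1 ^ 2)
          + p.2.2 * (1 + p.1 ^ 2) * (2 * p.2.1 * v.2.1)) = l • v →
      l ∈ Set.Ico (0 : ℝ) 1 → v = 0 := by
    intro p v l h hl
    obtain ⟨hl0, hl1⟩ := hl
    rw [Prod.ext_iff, Prod.ext_iff] at h
    obtain ⟨h1, h2, h3⟩ := h
    simp only [Prod.smul_fst, Prod.smul_snd, smul_eq_mul] at h1 h2 h3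
    have hax : aa p.1 ≠ l := ne_of_lt (lt_of_lt_of_le (aa_neg p.1) hl0)
    have hay : aa p.2.1 ≠ l := ne_of_lt (lt_of_lt_of_le (aa_neg p.2.1) hl0)
    have hv1 : v.1 = 0 := by
      by_contra hne
      exact hax (mul_right_cancel₀ hne (by linarith [h1]))
    have hv2 : v.2.1 = 0 := by
      by_contra hne
      exact hay (mul_right_cancel₀ hne (by linarith [h2]))
    have hv3 : v.2.2 = 0 := by
      by_contra hne
      rw [hv1, hv2] at h3
      have hgg : (1 + p.1 ^ 2) * (1 + p.2.1 ^ 2) = l :=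
        mul_right_cancel₀ hne (by ring_nf; ring_nf at h3; linarith)
      have h1x : (1:ℝ) ≤ 1 + p.1 ^ 2 := by nlinarith [sq_nonneg p.1]
      have h1y : (1:ℝ) ≤ 1 + p.2.1 ^ 2 := by nlinarith [sq_nonneg p.2.1]
      have : (1:ℝ) ≤ (1 + p.1 ^ 2) * (1 + p.2.1 ^ 2) := by nlinarith
      linarith [hgg ▸ this]
    exact Prod.ext hv1 (Prod.ext hv2 hv3)
  refine ⟨?_, ?_, ?_, ?_⟩
  · rw [hY]
    have hg : ∀ f : ℝ × ℝ × ℝ → ℝ, ContDiff ℝ (⊤ : ℕ∞) f →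
        ContDiff ℝ (⊤ : ℕ∞) (fun q => Real.sqrt (1 + f q ^ 2) - f q) := fun f hf => by
      have h1 : ContDiff ℝ (⊤ : ℕ∞) (fun q => 1 + f q ^ 2) := contDiff_const.add (hf.pow 2)
      exact (h1.sqrt fun q => ne_of_gt (one_add_sq_pos (f q))).sub hf
    refine ContDiff.prodMk (hg _ contDiff_fst)
      (ContDiff.prodMk (hg _ (contDiff_fst.comp contDiff_snd)) ?_)
    exact ((contDiff_snd.comp contDiff_snd).mul
      (contDiff_const.add ((contDiff_fst).pow 2))).mul
      (contDiff_const.add (((contDiff_fst.comp contDiff_snd)).pow 2))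
  · intro p
    obtain ⟨L, hL, hLval⟩ := key Y hYdef p
    rw [hL.fderiv]
    have hinj : Function.Injective L := by
      rw [injective_iff_map_eq_zero L]
      intro v hv
      refine hzero p v 0 ?_ ⟨le_refl 0, one_pos⟩
      rw [← hLval v, hv, zero_smul]
    exact ⟨hinj, LinearMap.surjective_of_injective (f := (L : ℝ × ℝ × ℝ →ₗ[ℝ] ℝ × ℝ × ℝ)) hinj⟩
  · intro p l v hv hlv hl
    obtain ⟨L, hL, hLval⟩ := key Y hYdef p
    rw [hL.fderiv] at hlv
    exact hv (hzero p v l (by rw [← hLval v, hlv]) hl)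
  · intro hsurj
    obtain ⟨p, hp⟩ := hsurj (0, 0, 0)
    rw [hYdef p, Prod.ext_iff] at hp
    have h1 : Real.sqrt (1 + p.1 ^ 2) - p.1 = 0 := hp.1
    linarith [lt_sqrt' p.1]
end

section
/- Let Y : ℝⁿ → ℝⁿ be a C¹ local diffeomorphism that is proper (preimages of compact sets are compact, equivalently S_Y = ∅). Then Y is a bijection, hence a global diffeomorphism (Hadamard's global inverse function theorem). -/
/-!
By the inverse function theorem `Y` is a local homeomorphism. A proper local homeomorphism
between Hausdorff spaces has finite fibres and is a closed map, hence a covering map. Its image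
is open and closed, so `Y` is onto. Since `ℝⁿ` is simply connected, the identity of `ℝⁿ` lifts
through `Y` to a section `σ` with `σ (Y a) = a`; then `σ ∘ Y` and `id` are two lifts of `Y`
agreeing at `a`, so they coincide on the connected space `ℝⁿ`, and `Y` is injective.
-/

open Set

theorem ContDiff.isLocalHomeomorph_of_bijective_fderiv {𝕜 E F : Type*} [RCLike 𝕜]
    [NormedAddCommGroup E] [NormedSpace 𝕜 E] [CompleteSpace E]
    [NormedAddCommGroup F] [NormedSpace 𝕜 F] [CompleteSpace F] {f : E → F}
    (hf : ContDiff 𝕜 1 f) (hf' : ∀ x, Function.Bijective (fderiv 𝕜 f x)) :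
    IsLocalHomeomorph f := by
  refine IsLocalHomeomorph.mk f fun x => ?_
  let f' : E ≃L[𝕜] F := .ofBijective (fderiv 𝕜 f x)
    (LinearMap.ker_eq_bot.mpr (hf' x).1) (LinearMap.range_eq_top.mpr (hf' x).2)
  have hf'x : HasStrictFDerivAt f (f' : E →L[𝕜] F) x :=
    hf.contDiffAt.hasStrictFDerivAt one_ne_zero
  exact ⟨hf'x.toOpenPartialHomeomorph f, hf'x.mem_toOpenPartialHomeomorph_source, fun _ _ => rfl⟩

section
variable {E X : Type*} [TopologicalSpace E] [TopologicalSpace X] {f : E → X}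

theorem IsLocalHomeomorph.isCoveringMap_of_isProperMap [T2Space E] (hf : IsLocalHomeomorph f)
    (hfp : IsProperMap f) : IsCoveringMap f :=
  isCoveringMap_iff_isCoveringMapOn_univ.mpr <|
    hfp.isClosedMap.isCoveringMapOn_of_isLocalHomeomorphOn
      (fun _ _ => (hfp.isCompact_preimage isCompact_singleton).finite
        (.of_openPartialHomeomorph f subset_rfl fun e _ =>
          let ⟨φ, he, hφ⟩ := hf e; ⟨φ, he, hφ.symm⟩))
      hf.isLocalHomeomorphOn

theorem IsLocalHomeomorph.surjective_of_isClosedMap [ConnectedSpace X] [Nonempty E]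
    (hf : IsLocalHomeomorph f) (hfc : IsClosedMap f) : Function.Surjective f :=
  range_eq_univ.mp <| IsClopen.eq_univ ⟨hfc.isClosed_range, hf.isOpenMap.isOpen_range⟩
    (range_nonempty f)

theorem IsCoveringMap.injective [PreconnectedSpace E] [SimplyConnectedSpace X]
    [LocallyPathConnectedSpace X] (hf : IsCoveringMap f) : Function.Injective f := by
  intro a b hab
  obtain ⟨σ, ⟨hσa, hfσ⟩, -⟩ := hf.existsUnique_continuousMap_lifts (.id X) (f a) a rfl
  have hσf : σ ∘ f = id :=
    hf.eq_of_comp_eq (σ.continuous.comp hf.continuous) continuous_id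
      (by rw [← Function.comp_assoc, hfσ]; rfl) a hσa
  calc a = σ (f b) := by rw [← hab, hσa]
    _ = b := congrFun hσf b
end

/-- Hadamard's global inverse function theorem: a proper `C¹` local diffeomorphism
`Y : ℝⁿ → ℝⁿ` is bijective. -/
theorem stmt18 {n : ℕ} (Y : (Fin n → ℝ) → (Fin n → ℝ)) (hY : ContDiff ℝ 1 Y)
    (hld : ∀ p, Function.Bijective (fderiv ℝ Y p))
    (hproper : ∀ K : Set (Fin n → ℝ), IsCompact K → IsCompact (Y ⁻¹' K)) :
    Function.Bijective Y := by
  have hloc := hY.isLocalHomeomorph_of_bijective_fderiv hld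
  have hprop : IsProperMap Y := isProperMap_iff_isCompact_preimage.mpr ⟨hloc.continuous, hproper⟩
  exact ⟨(hloc.isCoveringMap_of_isProperMap hprop).injective,
    hloc.surjective_of_isClosedMap hprop.isClosedMap⟩
end
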